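/- Let U be an n×n orthogonal matrix partitioned into blocks U_{ᾱ_k ᾱ_l} (k,l = 1,...,d). If all off-diagonal blocks satisfy ‖U_{ᾱ_k ᾱ_l}‖ ≤ c for k ≠ l, then each diagonal block satisfies ‖U_{ᾱ_k ᾱ_k} U_{ᾱ_k ᾱ_k}^T − I_{|ᾱ_k|}‖ ≤ (d−1) c². -/
import Mathlib


open scoped BigOperators
open Matrix

/-- Frobenius norm of a (possibly rectangular) real matrix. -/
noncomputable def fnorm {m m' : Type*} [Fintype m] [Fintype m']
    (X : Matrix m m' ℝ) : ℝ :=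
  Real.sqrt (∑ i, ∑ j, X i j ^ 2)

attribute [local instance] Matrix.frobeniusSeminormedAddCommGroup

lemma fnorm_eq_norm {m m' : Type*} [Fintype m] [Fintype m'] (X : Matrix m m' ℝ) :
    fnorm X = ‖X‖ := by
  rw [fnorm, Matrix.frobenius_norm_def, Real.sqrt_eq_rpow]
  congr 1
  refine Finset.sum_congr rfl fun i _ => Finset.sum_congr rfl fun j _ => ?_
  rw [Real.rpow_two, Real.norm_eq_abs, sq_abs]

/-- if `U` is orthogonal with block partition `U_{ᾱ_k ᾱ_l}` and
all off-diagonal blocks have Frobenius norm at most `c`, then every diagonal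
block satisfies `‖U_{ᾱ_k ᾱ_k} U_{ᾱ_k ᾱ_k}ᵀ − I‖ ≤ (d−1)c²`. -/
theorem stmt11 {n d : ℕ} (U : Matrix (Fin n) (Fin n) ℝ) (hU : Uᵀ * U = 1)
    (ᾱ : Fin d → Finset (Fin n))
    (hpart : ∀ i : Fin n, ∃! k : Fin d, i ∈ ᾱ k)
    (c : ℝ) (hc : 0 ≤ c)
    (hoff : ∀ k l : Fin d, k ≠ l →
      fnorm (Matrix.of fun (i : ↥(ᾱ k)) (j : ↥(ᾱ l)) => U i.1 j.1) ≤ c) :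
    ∀ k : Fin d,
      fnorm ((Matrix.of fun (i j : ↥(ᾱ k)) => U i.1 j.1) *
          (Matrix.of fun (i j : ↥(ᾱ k)) => U i.1 j.1)ᵀ - 1) ≤
        ((d : ℝ) - 1) * c ^ 2 := by
  intro k
  classical
  set B : ∀ l : Fin d, Matrix (↥(ᾱ k)) (↥(ᾱ l)) ℝ :=
    fun l => Matrix.of fun (i : ↥(ᾱ k)) (j : ↥(ᾱ l)) => U i.1 j.1 with hB
  have hUU : U * Uᵀ = 1 := mul_eq_one_comm.mp hU
  -- classification function for the partition
  have hκ : ∀ l : Fin d, ∀ i : Fin n, i ∈ ᾱ l ↔ (hpart i).choose = l := by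
    intro l i
    constructor
    · intro h; exact ((hpart i).choose_spec.2 l h).symm
    · intro h; rw [← h]; exact (hpart i).choose_spec.1
  -- key identity: ∑ l, B l * (B l)ᵀ = 1
  have hsum : ∑ l : Fin d, B l * (B l)ᵀ = 1 := by
    ext i j
    rw [Matrix.sum_apply]
    have : ∀ l : Fin d, (B l * (B l)ᵀ) i j = ∑ m ∈ ᾱ l, U i.1 m * U j.1 m := by
      intro l
      rw [Matrix.mul_apply]
      simp only [Matrix.transpose_apply, hB, Matrix.of_apply]
      exact Finset.sum_coe_sort (ᾱ l) fun m => U i.1 m * U j.1 m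
    simp_rw [this]
    have hαfilter : ∀ l : Fin d, ᾱ l = Finset.univ.filter (fun m => (hpart m).choose = l) := by
      intro l; ext m; simp [hκ l m]
    have : (∑ l : Fin d, ∑ m ∈ ᾱ l, U i.1 m * U j.1 m)
        = ∑ m : Fin n, U i.1 m * U j.1 m := by
      exact (Finset.sum_congr rfl fun l _ => by rw [hαfilter l]).trans
        (Finset.sum_fiberwise_of_maps_to (fun x _ => Finset.mem_univ _) _)
    rw [this]
    have := congrFun (congrFun hUU i.1) j.1
    rw [Matrix.mul_apply] at this
    simp only [Matrix.transpose_apply] at this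
    rw [this]
    by_cases hij : i = j
    · subst hij; simp [Matrix.one_apply]
    · have : i.1 ≠ j.1 := fun h => hij (Subtype.ext h)
      simp [Matrix.one_apply, hij, this]
  -- rewrite the diagonal block difference
  have hdiff : B k * (B k)ᵀ - 1 = -∑ l ∈ Finset.univ.erase k, B l * (B l)ᵀ := by
    rw [← hsum, ← Finset.add_sum_erase _ _ (Finset.mem_univ k)]
    abel
  rw [fnorm_eq_norm, hdiff, norm_neg]
  calc ‖∑ l ∈ Finset.univ.erase k, B l * (B l)ᵀ‖
      ≤ ∑ l ∈ Finset.univ.erase k, ‖B l * (B l)ᵀ‖ := norm_sum_le _ _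
    _ ≤ ∑ l ∈ Finset.univ.erase k, c ^ 2 := by
        refine Finset.sum_le_sum fun l hl => ?_
        have hlk : l ≠ k := Finset.ne_of_mem_erase hl
        have hBl : ‖B l‖ ≤ c := by
          rw [← fnorm_eq_norm]; exact hoff k l (Ne.symm hlk)
        calc ‖B l * (B l)ᵀ‖ ≤ ‖B l‖ * ‖(B l)ᵀ‖ := Matrix.frobenius_norm_mul _ _
          _ = ‖B l‖ * ‖B l‖ := by rw [Matrix.frobenius_norm_transpose]
          _ ≤ c * c := mul_le_mul hBl hBl (norm_nonneg _) hc
          _ = c ^ 2 := (sq c).symm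
    _ = ((d : ℝ) - 1) * c ^ 2 := by
        rw [Finset.sum_const, nsmul_eq_mul]
        congr 1
        have hd : 0 < d := k.pos
        rw [Finset.card_erase_of_mem (Finset.mem_univ k), Finset.card_univ, Fintype.card_fin,
          Nat.cast_sub hd, Nat.cast_one]
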